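/- Let n ≥ 1, β > 0 and let K_t(x,z) (t > 0, x, z ∈ ℝⁿ) be a measurable family of kernels satisfying |K_t(x,z)| ≤ C₀ t^β (t + |x−z|)^{−(n+β)}. Let f be locally integrable on ℝⁿ with classical BMO constant M, i.e., |B|⁻¹ ∫_B |f − f_B| ≤ M for every ball B. Then there exists a constant C (depending only on n, β, C₀) such that for every ball B = B(x₀,r), every x ∈ B and every t > 0: ∫_{ℝⁿ ∖ 2B} |K_t(x,z)| |f(z) − f_B| dz ≤ C (t/r)^β M. -/

import Mathlib

/-!
Cover the complement of `2B` by the dyadic annuli `2^(k+2)B \ 2^(k+1)B`, `k ≥ 0`. For `x ∈ B` and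
`z` outside `2B` one has `|x - z| ≥ |z - x₀| / 2`, so on the `k`-th annulus the kernel is at most
`C₀ 2^(n+β) t^β (2^(k+1) r)^(-(n+β))`. Along the chain `B ⊂ 2B ⊂ 4B ⊂ ⋯` consecutive averages of
`f` differ by at most `2^n M`, whence `∫_{2^j B} |f - f_B| ≤ |2^j B| (1 + j 2^n) M`. The `k`-th
annulus therefore contributes at most a constant times `(t/r)^β (k + 2) 2^(-kβ) M`, and these terms
are summable because `β > 0`.
-/

open MeasureTheory Metric Set

/-- The average of `f` over the ball `B(x,r)`. -/
noncomputable def avgBall (n : ℕ) (f : EuclideanSpace ℝ (Fin n) → ℝ)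
    (x : EuclideanSpace ℝ (Fin n)) (r : ℝ) : ℝ :=
  ((volume (ball x r)).toReal)⁻¹ * ∫ y in ball x r, f y

open Module

section Measure

variable {α : Type*} [MeasurableSpace α] {μ : Measure α}

theorem integral_le_of_lintegral_ofReal_le {g : α → ℝ} (hg : ∀ x, 0 ≤ g x) {B : ℝ}
    (hB : 0 ≤ B) (h : ∫⁻ x, ENNReal.ofReal (g x) ∂μ ≤ ENNReal.ofReal B) :
    ∫ x, g x ∂μ ≤ B := by
  refine (le_abs_self _).trans ((norm_integral_le_lintegral_norm g).trans ?_)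
  simp only [Real.norm_eq_abs, abs_of_nonneg (hg _)]
  exact ENNReal.toReal_le_of_le_ofReal hB h

theorem abs_setAverage_sub_le {s : Set α} (hs₀ : μ s ≠ 0) (hs : μ s ≠ ⊤) {f : α → ℝ}
    (hf : IntegrableOn f s μ) (c : ℝ) :
    |⨍ y in s, f y ∂μ - c| ≤ ⨍ y in s, |f y - c| ∂μ := by
  have hμs : 0 < μ.real s := ENNReal.toReal_pos hs₀ hs
  have hsub : ⨍ y in s, f y ∂μ - c = (μ.real s)⁻¹ * ∫ y in s, (f y - c) ∂μ := by
    rw [integral_sub hf (integrableOn_const hs), setIntegral_const, setAverage_eq,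
      smul_eq_mul, smul_eq_mul]
    field_simp
  rw [hsub, setAverage_eq, smul_eq_mul, abs_mul, abs_of_pos (inv_pos.2 hμs)]
  gcongr
  exact abs_integral_le_integral_abs

end Measure

section Metric

variable {X : Type*} [PseudoMetricSpace X]

theorem add_dist_rpow_neg_le {x x₀ z : X} {r t a : ℝ} (ht : 0 ≤ t) (ha : 0 ≤ a)
    (hx : x ∈ ball x₀ r) (hz : z ∉ ball x₀ (2 * r)) :
    (t + dist x z) ^ (-a) ≤ 2 ^ a * dist z x₀ ^ (-a) := by
  rw [mem_ball] at hx
  rw [mem_ball, not_lt] at hz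
  have hhalf : dist z x₀ / 2 ≤ t + dist x z := by
    linarith [dist_triangle z x x₀, dist_comm x z]
  calc (t + dist x z) ^ (-a) ≤ (dist z x₀ / 2) ^ (-a) :=
        Real.rpow_le_rpow_of_nonpos (by linarith [dist_nonneg (x := x) (y := x₀)]) hhalf
          (neg_nonpos.2 ha)
    _ = 2 ^ a * dist z x₀ ^ (-a) := by
        rw [Real.div_rpow dist_nonneg zero_le_two, Real.rpow_neg zero_le_two, div_inv_eq_mul,
          mul_comm]

theorem compl_ball_subset_iUnion_annulus (x : X) {r : ℝ} (hr : 0 < r) :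
    (ball x (2 * r))ᶜ ⊆ ⋃ k : ℕ, ball x (2 ^ (k + 2) * r) \ ball x (2 ^ (k + 1) * r) := by
  intro z hz
  rw [mem_compl_iff, mem_ball, not_lt] at hz
  obtain ⟨k, hk, hk'⟩ := exists_nat_pow_near ((one_le_div (by positivity)).2 hz) one_lt_two
  rw [le_div_iff₀ (by positivity)] at hk
  rw [div_lt_iff₀ (by positivity)] at hk'
  refine mem_iUnion.2 ⟨k, ?_, ?_⟩
  · rwa [mem_ball, pow_succ, mul_assoc]
  · rwa [mem_ball, not_lt, pow_succ, mul_assoc]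

variable [MeasurableSpace X]

def BMOBound (μ : Measure X) (f : X → ℝ) (M : ℝ) : Prop :=
  ∀ x r, 0 < r → ⨍ y in ball x r, |f y - ⨍ z in ball x r, f z ∂μ| ∂μ ≤ M

variable [ProperSpace X] {μ : Measure X}

theorem MeasureTheory.LocallyIntegrable.integrableOn_ball {f : X → ℝ}
    (hf : LocallyIntegrable f μ) (x : X) (s : ℝ) : IntegrableOn f (ball x s) μ :=
  (hf.integrableOn_isCompact (isCompact_closedBall x s)).mono_set ball_subset_closedBall

variable [IsFiniteMeasureOnCompacts μ]

theorem MeasureTheory.LocallyIntegrable.integrableOn_ball_abs_sub {f : X → ℝ}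
    (hf : LocallyIntegrable f μ) (x : X) (s c : ℝ) :
    IntegrableOn (fun y => |f y - c|) (ball x s) μ :=
  ((hf.integrableOn_ball x s).sub (integrableOn_const measure_ball_lt_top.ne)).abs

theorem BMOBound.setIntegral_abs_sub_le {f : X → ℝ} {M : ℝ} (hBMO : BMOBound μ f M) (x : X)
    {s : ℝ} (hs : 0 < s) :
    ∫ y in ball x s, |f y - ⨍ z in ball x s, f z ∂μ| ∂μ ≤ μ.real (ball x s) * M := by
  rw [← measure_smul_setAverage _ measure_ball_lt_top.ne, smul_eq_mul]
  exact mul_le_mul_of_nonneg_left (hBMO x s hs) measureReal_nonneg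

end Metric

noncomputable def dyadicTailSum (d : ℕ) (β : ℝ) : ℝ :=
  ∑' k : ℕ, (1 + (k + 2) * 2 ^ d) * ((2 : ℝ) ^ (-β)) ^ (k + 1)

theorem summable_dyadicTail (d : ℕ) {β : ℝ} (hβ : 0 < β) :
    Summable fun k : ℕ => (1 + (k + 2) * 2 ^ d) * ((2 : ℝ) ^ (-β)) ^ (k + 1) := by
  set q : ℝ := 2 ^ (-β)
  have hq : ‖q‖ < 1 := by
    rw [Real.norm_of_nonneg (by positivity)]
    exact Real.rpow_lt_one_of_one_lt_of_neg one_lt_two (neg_neg_of_pos hβ)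
  have hgeom : Summable fun k : ℕ => q ^ k := summable_geometric_of_norm_lt_one hq
  have hlin : Summable fun k : ℕ => (k : ℝ) * q ^ k := by
    simpa using summable_pow_mul_geometric_of_norm_lt_one 1 hq
  refine ((hgeom.mul_left (q * (1 + 2 * 2 ^ d))).add (hlin.mul_left (q * 2 ^ d))).congr
    fun k => ?_
  ring

theorem dyadicTailSum_pos (d : ℕ) {β : ℝ} (hβ : 0 < β) : 0 < dyadicTailSum d β :=
  (summable_dyadicTail d hβ).tsum_pos (fun _ => by positivity) 0 (by positivity)

section AddHaar

variable {E : Type*} [NormedAddCommGroup E] [NormedSpace ℝ E] [FiniteDimensional ℝ E]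
  [MeasurableSpace E] [BorelSpace E] {μ : Measure E} [μ.IsAddHaarMeasure]

theorem measureReal_ball_eq (x : E) {s : ℝ} (hs : 0 < s) :
    μ.real (ball x s) = s ^ finrank ℝ E * μ.real (ball 0 1) := by
  rw [measureReal_def, Measure.addHaar_ball_of_pos μ x hs, ENNReal.toReal_mul,
    ENNReal.toReal_ofReal (by positivity), measureReal_def]

theorem abs_setAverage_ball_two_mul_sub_le {f : E → ℝ} {M : ℝ}
    (hf : LocallyIntegrable f μ) (hBMO : BMOBound μ f M) (x : E) {s : ℝ} (hs : 0 < s) :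
    |⨍ y in ball x (2 * s), f y ∂μ - ⨍ y in ball x s, f y ∂μ|
      ≤ 2 ^ finrank ℝ E * M := by
  set c := ⨍ y in ball x (2 * s), f y ∂μ
  have h2s : 0 < 2 * s := by positivity
  have hμs : 0 < μ.real (ball x s) :=
    ENNReal.toReal_pos (measure_ball_pos μ x hs).ne' measure_ball_lt_top.ne
  have hratio : μ.real (ball x (2 * s)) = 2 ^ finrank ℝ E * μ.real (ball x s) := by
    rw [measureReal_ball_eq x hs, measureReal_ball_eq x h2s, mul_pow, mul_assoc]
  calc |⨍ y in ball x (2 * s), f y ∂μ - ⨍ y in ball x s, f y ∂μ|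
      = |⨍ y in ball x s, f y ∂μ - c| := abs_sub_comm _ _
    _ ≤ ⨍ y in ball x s, |f y - c| ∂μ :=
        abs_setAverage_sub_le (measure_ball_pos μ x hs).ne' measure_ball_lt_top.ne
          (hf.integrableOn_ball x s) c
    _ = (μ.real (ball x s))⁻¹ * ∫ y in ball x s, |f y - c| ∂μ := by
        rw [setAverage_eq, smul_eq_mul]
    _ ≤ (μ.real (ball x s))⁻¹ * ∫ y in ball x (2 * s), |f y - c| ∂μ := by
        refine mul_le_mul_of_nonneg_left (setIntegral_mono_set
          (hf.integrableOn_ball_abs_sub x _ c) (.of_forall fun _ => abs_nonneg _)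
          (ball_subset_ball (by linarith)).eventuallyLE) (inv_nonneg.2 hμs.le)
    _ ≤ (μ.real (ball x s))⁻¹ * (μ.real (ball x (2 * s)) * M) := by
        gcongr
        exact hBMO.setIntegral_abs_sub_le x h2s
    _ = 2 ^ finrank ℝ E * M := by
        rw [hratio]
        field_simp

theorem abs_setAverage_ball_two_pow_mul_sub_le {f : E → ℝ} {M : ℝ}
    (hf : LocallyIntegrable f μ) (hBMO : BMOBound μ f M) (x : E) {s : ℝ} (hs : 0 < s)
    (j : ℕ) :
    |⨍ y in ball x (2 ^ j * s), f y ∂μ - ⨍ y in ball x s, f y ∂μ|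
      ≤ j * (2 ^ finrank ℝ E * M) := by
  induction j with
  | zero => simp
  | succ j ih =>
    have hstep := abs_setAverage_ball_two_mul_sub_le hf hBMO x (s := 2 ^ j * s) (by positivity)
    rw [← mul_assoc, ← pow_succ'] at hstep
    push_cast
    linarith [abs_sub_le (⨍ y in ball x (2 ^ (j + 1) * s), f y ∂μ)
      (⨍ y in ball x (2 ^ j * s), f y ∂μ) (⨍ y in ball x s, f y ∂μ)]

theorem setIntegral_ball_two_pow_mul_abs_sub_le {f : E → ℝ} {M : ℝ}
    (hf : LocallyIntegrable f μ) (hBMO : BMOBound μ f M) (x : E) {s : ℝ} (hs : 0 < s)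
    (j : ℕ) :
    ∫ y in ball x (2 ^ j * s), |f y - ⨍ z in ball x s, f z ∂μ| ∂μ
      ≤ μ.real (ball x (2 ^ j * s)) * ((1 + j * 2 ^ finrank ℝ E) * M) := by
  set c := ⨍ z in ball x s, f z ∂μ
  set cj := ⨍ z in ball x (2 ^ j * s), f z ∂μ
  have hint := hf.integrableOn_ball_abs_sub x (2 ^ j * s) cj
  calc ∫ y in ball x (2 ^ j * s), |f y - c| ∂μ
      ≤ ∫ y in ball x (2 ^ j * s), (|f y - cj| + |cj - c|) ∂μ := by
        refine setIntegral_mono_on (hf.integrableOn_ball_abs_sub x _ c)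
          (hint.add (integrableOn_const measure_ball_lt_top.ne)) measurableSet_ball
          fun y _ => ?_
        simpa using abs_sub_le (f y) cj c
    _ = ∫ y in ball x (2 ^ j * s), |f y - cj| ∂μ +
          μ.real (ball x (2 ^ j * s)) * |cj - c| := by
        rw [integral_add hint (integrableOn_const measure_ball_lt_top.ne), setIntegral_const,
          smul_eq_mul]
    _ ≤ μ.real (ball x (2 ^ j * s)) * M +
          μ.real (ball x (2 ^ j * s)) * (j * (2 ^ finrank ℝ E * M)) := by
        gcongr
        · exact hBMO.setIntegral_abs_sub_le x (by positivity)
        · exact abs_setAverage_ball_two_pow_mul_sub_le hf hBMO x hs j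
    _ = μ.real (ball x (2 ^ j * s)) * ((1 + j * 2 ^ finrank ℝ E) * M) := by ring

theorem lintegral_annulus_rpow_mul_abs_sub_le {f : E → ℝ} {M β : ℝ} (hβ : 0 ≤ β)
    (hf : LocallyIntegrable f μ) (hBMO : BMOBound μ f M) (x₀ : E) {r : ℝ} (hr : 0 < r)
    (k : ℕ) :
    ∫⁻ z in ball x₀ (2 ^ (k + 2) * r) \ ball x₀ (2 ^ (k + 1) * r), ENNReal.ofReal
        (dist z x₀ ^ (-(finrank ℝ E + β)) * |f z - ⨍ y in ball x₀ r, f y ∂μ|) ∂μ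
      ≤ ENNReal.ofReal (2 ^ finrank ℝ E * μ.real (ball (0 : E) 1) * r ^ (-β) * M *
          ((1 + (k + 2) * 2 ^ finrank ℝ E) * ((2 : ℝ) ^ (-β)) ^ (k + 1))) := by
  set d := finrank ℝ E
  set c := ⨍ y in ball x₀ r, f y ∂μ
  set s : ℝ := 2 ^ (k + 1) * r
  set R : ℝ := 2 ^ (k + 2) * r
  have hs : 0 < s := by positivity
  have hR : R = 2 * s := by ring
  have hweight : ∀ z ∈ ball x₀ R \ ball x₀ s,
      ENNReal.ofReal (dist z x₀ ^ (-(d + β)) * |f z - c|)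
        ≤ ENNReal.ofReal (s ^ (-(d + β))) * ENNReal.ofReal |f z - c| := by
    rintro z ⟨-, hz⟩
    rw [mem_ball, not_lt] at hz
    rw [← ENNReal.ofReal_mul (by positivity)]
    exact ENNReal.ofReal_le_ofReal (mul_le_mul_of_nonneg_right
      (Real.rpow_le_rpow_of_nonpos hs hz (by linarith [d.cast_nonneg (α := ℝ)])) (abs_nonneg _))
  have hscale :
      s ^ (-(d + β)) * (2 * s) ^ d = 2 ^ d * r ^ (-β) * ((2 : ℝ) ^ (-β)) ^ (k + 1) := by
    rw [mul_pow, neg_add, Real.rpow_add hs, Real.rpow_neg hs.le, Real.rpow_natCast,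
      Real.mul_rpow (by positivity) hr.le, ← Real.rpow_pow_comm zero_le_two]
    field_simp
  calc ∫⁻ z in ball x₀ R \ ball x₀ s,
          ENNReal.ofReal (dist z x₀ ^ (-(d + β)) * |f z - c|) ∂μ
      ≤ ∫⁻ z in ball x₀ R \ ball x₀ s,
          ENNReal.ofReal (s ^ (-(d + β))) * ENNReal.ofReal |f z - c| ∂μ :=
        setLIntegral_mono' (measurableSet_ball.diff measurableSet_ball) hweight
    _ ≤ ENNReal.ofReal (s ^ (-(d + β))) *
          ∫⁻ z in ball x₀ R, ENNReal.ofReal |f z - c| ∂μ := by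
        rw [lintegral_const_mul' _ _ ENNReal.ofReal_ne_top]
        gcongr
        exact sdiff_subset
    _ = ENNReal.ofReal (s ^ (-(d + β))) *
          ENNReal.ofReal (∫ z in ball x₀ R, |f z - c| ∂μ) := by
        rw [ofReal_integral_eq_lintegral_ofReal (hf.integrableOn_ball_abs_sub x₀ R c)
          (.of_forall fun _ => abs_nonneg _)]
    _ ≤ ENNReal.ofReal (s ^ (-(d + β))) *
          ENNReal.ofReal (μ.real (ball x₀ R) * ((1 + (k + 2 : ℕ) * 2 ^ d) * M)) := by
        gcongr
        exact setIntegral_ball_two_pow_mul_abs_sub_le hf hBMO x₀ hr (k + 2)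
    _ = _ := by
        rw [← ENNReal.ofReal_mul (by positivity), hR, measureReal_ball_eq x₀ (by positivity)]
        congr 1
        push_cast
        linear_combination (μ.real (ball (0 : E) 1) * ((1 + (k + 2) * 2 ^ d) * M)) * hscale

theorem lintegral_compl_ball_rpow_mul_abs_sub_le {f : E → ℝ} {M β : ℝ} (hβ : 0 < β)
    (hf : LocallyIntegrable f μ) (hM : 0 ≤ M) (hBMO : BMOBound μ f M) (x₀ : E) {r : ℝ}
    (hr : 0 < r) :
    ∫⁻ z in (ball x₀ (2 * r))ᶜ, ENNReal.ofReal
        (dist z x₀ ^ (-(finrank ℝ E + β)) * |f z - ⨍ y in ball x₀ r, f y ∂μ|) ∂μ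
      ≤ ENNReal.ofReal (2 ^ finrank ℝ E * μ.real (ball (0 : E) 1) * r ^ (-β) * M *
          dyadicTailSum (finrank ℝ E) β) := by
  set A := 2 ^ finrank ℝ E * μ.real (ball (0 : E) 1) * r ^ (-β) * M
  have hA : 0 ≤ A := by positivity
  calc _ ≤ ∑' k : ℕ, ∫⁻ z in ball x₀ (2 ^ (k + 2) * r) \ ball x₀ (2 ^ (k + 1) * r),
          ENNReal.ofReal (dist z x₀ ^ (-(finrank ℝ E + β)) *
            |f z - ⨍ y in ball x₀ r, f y ∂μ|) ∂μ :=
        (lintegral_mono_set (compl_ball_subset_iUnion_annulus x₀ hr)).trans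
          (lintegral_iUnion_le _ _)
    _ ≤ ∑' k : ℕ, ENNReal.ofReal
          (A * ((1 + (k + 2) * 2 ^ finrank ℝ E) * ((2 : ℝ) ^ (-β)) ^ (k + 1))) :=
        ENNReal.tsum_le_tsum fun k => lintegral_annulus_rpow_mul_abs_sub_le hβ.le hf hBMO x₀ hr k
    _ = ENNReal.ofReal (A * dyadicTailSum (finrank ℝ E) β) := by
        rw [← ENNReal.ofReal_tsum_of_nonneg (fun _ => by positivity)
          ((summable_dyadicTail _ hβ).mul_left A), tsum_mul_left, dyadicTailSum]

theorem setIntegral_compl_ball_mul_abs_sub_le {f k : E → ℝ} {M β A : ℝ} (hβ : 0 < β)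
    (hf : LocallyIntegrable f μ) (hM : 0 ≤ M) (hBMO : BMOBound μ f M) (x₀ : E) {r : ℝ}
    (hr : 0 < r) (hA : 0 ≤ A)
    (hk : ∀ z ∉ ball x₀ (2 * r), |k z| ≤ A * dist z x₀ ^ (-(finrank ℝ E + β))) :
    ∫ z in (ball x₀ (2 * r))ᶜ, |k z| * |f z - ⨍ y in ball x₀ r, f y ∂μ| ∂μ
      ≤ A * (2 ^ finrank ℝ E * μ.real (ball (0 : E) 1) * r ^ (-β) * M *
          dyadicTailSum (finrank ℝ E) β) := by
  set c := ⨍ y in ball x₀ r, f y ∂μ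
  have hS := dyadicTailSum_pos (finrank ℝ E) hβ
  refine integral_le_of_lintegral_ofReal_le (fun _ => by positivity) (by positivity) ?_
  calc ∫⁻ z in (ball x₀ (2 * r))ᶜ, ENNReal.ofReal (|k z| * |f z - c|) ∂μ
      ≤ ∫⁻ z in (ball x₀ (2 * r))ᶜ, ENNReal.ofReal A *
          ENNReal.ofReal (dist z x₀ ^ (-(finrank ℝ E + β)) * |f z - c|) ∂μ := by
        refine setLIntegral_mono' measurableSet_ball.compl fun z hz => ?_
        rw [← ENNReal.ofReal_mul hA, ← mul_assoc]
        exact ENNReal.ofReal_le_ofReal (mul_le_mul_of_nonneg_right (hk z hz) (abs_nonneg _))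
    _ ≤ _ := by
        rw [lintegral_const_mul' _ _ ENNReal.ofReal_ne_top, ENNReal.ofReal_mul hA]
        gcongr
        exact lintegral_compl_ball_rpow_mul_abs_sub_le hβ hf hM hBMO x₀ hr

end AddHaar

theorem avgBall_eq_setAverage (n : ℕ) (f : EuclideanSpace ℝ (Fin n) → ℝ)
    (x : EuclideanSpace ℝ (Fin n)) (r : ℝ) : avgBall n f x r = ⨍ y in ball x r, f y := by
  rw [avgBall, setAverage_eq, smul_eq_mul, measureReal_def]

theorem stmt_16_general (n : ℕ) (β : ℝ) (hβ : 0 < β)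
    (K : ℝ → EuclideanSpace ℝ (Fin n) → EuclideanSpace ℝ (Fin n) → ℝ)
    (C₀ : ℝ) (hC₀ : 0 < C₀)
    (hKsize : ∀ (t : ℝ) (x z : EuclideanSpace ℝ (Fin n)), 0 < t →
      |K t x z| ≤ C₀ * t ^ β * (t + dist x z) ^ (-((n : ℝ) + β)))
    (f : EuclideanSpace ℝ (Fin n) → ℝ) (hf : LocallyIntegrable f volume)
    (M : ℝ) (hM : 0 ≤ M)
    (hBMO : ∀ (x : EuclideanSpace ℝ (Fin n)) (r : ℝ), 0 < r →
      ((volume (ball x r)).toReal)⁻¹ * ∫ y in ball x r, |f y - avgBall n f x r| ≤ M) :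
    ∃ C > (0 : ℝ), ∀ (x₀ : EuclideanSpace ℝ (Fin n)) (r : ℝ), 0 < r →
      ∀ x ∈ ball x₀ r, ∀ t : ℝ, 0 < t →
        ∫ z in (ball x₀ (2 * r))ᶜ, |K t x z| * |f z - avgBall n f x₀ r|
          ≤ C * (t / r) ^ β * M := by
  have hbmo : BMOBound volume f M := fun x r hr => by
    simpa only [avgBall_eq_setAverage, setAverage_eq, smul_eq_mul, measureReal_def]
      using hBMO x r hr
  have hd : finrank ℝ (EuclideanSpace ℝ (Fin n)) = n := finrank_euclideanSpace_fin
  have hκ : 0 < volume.real (ball (0 : EuclideanSpace ℝ (Fin n)) 1) :=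
    ENNReal.toReal_pos (measure_ball_pos _ _ one_pos).ne' measure_ball_lt_top.ne
  have hS := dyadicTailSum_pos n hβ
  refine ⟨C₀ * 2 ^ ((n : ℝ) + β) *
    (2 ^ n * volume.real (ball (0 : EuclideanSpace ℝ (Fin n)) 1) * dyadicTailSum n β),
    by positivity, fun x₀ r hr x hx t ht => ?_⟩
  have hkernel : ∀ z ∉ ball x₀ (2 * r), |K t x z| ≤ C₀ * t ^ β * 2 ^ ((n : ℝ) + β) *
      dist z x₀ ^ (-(finrank ℝ (EuclideanSpace ℝ (Fin n)) + β)) := fun z hz => by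
    rw [hd, mul_assoc _ (2 ^ _)]
    exact (hKsize t x z ht).trans
      (by gcongr; exact add_dist_rpow_neg_le ht.le (by positivity) hx hz)
  rw [avgBall_eq_setAverage]
  refine (setIntegral_compl_ball_mul_abs_sub_le hβ hf hM hbmo x₀ hr (by positivity)
    hkernel).trans_eq ?_
  rw [hd, Real.div_rpow ht.le hr.le, Real.rpow_neg hr.le]
  ring

theorem stmt_16 (n : ℕ) (hn : 1 ≤ n) (β : ℝ) (hβ : 0 < β)
    (K : ℝ → EuclideanSpace ℝ (Fin n) → EuclideanSpace ℝ (Fin n) → ℝ)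
    (hKmeas : Measurable fun p : ℝ × EuclideanSpace ℝ (Fin n) × EuclideanSpace ℝ (Fin n) =>
      K p.1 p.2.1 p.2.2)
    (C₀ : ℝ) (hC₀ : 0 < C₀)
    (hKsize : ∀ (t : ℝ) (x z : EuclideanSpace ℝ (Fin n)), 0 < t →
      |K t x z| ≤ C₀ * t ^ β * (t + dist x z) ^ (-((n : ℝ) + β)))
    (f : EuclideanSpace ℝ (Fin n) → ℝ) (hf : LocallyIntegrable f volume)
    (M : ℝ) (hM : 0 ≤ M)
    (hBMO : ∀ (x : EuclideanSpace ℝ (Fin n)) (r : ℝ), 0 < r →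
      ((volume (ball x r)).toReal)⁻¹ * ∫ y in ball x r, |f y - avgBall n f x r| ≤ M) :
    ∃ C > (0 : ℝ), ∀ (x₀ : EuclideanSpace ℝ (Fin n)) (r : ℝ), 0 < r →
      ∀ x ∈ ball x₀ r, ∀ t : ℝ, 0 < t →
        ∫ z in (ball x₀ (2 * r))ᶜ, |K t x z| * |f z - avgBall n f x₀ r|
          ≤ C * (t / r) ^ β * M :=
  stmt_16_general n β hβ K C₀ hC₀ hKsize f hf M hM hBMO
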